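/- arXiv:1705.00663 — 4 statements merged into one kernel-verified Lean document; each statement's English description precedes it below -/
import Mathlib

section
/- Let U and P be finite-dimensional real inner product spaces, let H : U × P → U and J : U × P → ℝ be Fréchet differentiable, and let u : P → U be a differentiable map with u(ρ) = H(u(ρ), ρ) for all ρ ∈ P. Fix ρ₀ ∈ P and suppose ū ∈ U satisfies the adjoint equation ū = ∇_u J(u(ρ₀), ρ₀) + (∂_u H(u(ρ₀), ρ₀))* ū. Then the gradient at ρ₀ of the reduced objective ρ ↦ J(u(ρ), ρ) equals ∇_ρ J(u(ρ₀), ρ₀) + (∂_ρ H(u(ρ₀), ρ₀))* ū. -/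
/-!
Differentiating the fixed-point identity gives the sensitivity equation `u' = ∂ᵤH ∘ u' + ∂_ρH`, and
the chain rule gives the reduced derivative `∂ᵤJ ∘ u' + ∂_ρJ`. Pairing `ū` with `u' h` in both the
adjoint and the sensitivity equation yields `∂ᵤJ (u' h) = ⟪ū, ∂_ρH h⟫ = ⟪(∂_ρH)* ū, h⟫`, which
eliminates the unknown sensitivity `u'`.
-/

open InnerProductSpace ContinuousLinearMap

section PartialDerivatives

variable {𝕜 E F G : Type*} [NontriviallyNormedField 𝕜]
  [NormedAddCommGroup E] [NormedSpace 𝕜 E] [NormedAddCommGroup F] [NormedSpace 𝕜 F]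
  [NormedAddCommGroup G] [NormedSpace 𝕜 G]

theorem DifferentiableAt.fderiv_prodMk_left {f : E × F → G} {x : E} {y : F}
    (hf : DifferentiableAt 𝕜 f (x, y)) :
    fderiv 𝕜 (fun v => f (v, y)) x = (fderiv 𝕜 f (x, y)).comp (inl 𝕜 E F) :=
  (hf.hasFDerivAt.comp x (hasFDerivAt_prodMk_left x y)).fderiv

theorem DifferentiableAt.fderiv_prodMk_right {f : E × F → G} {x : E} {y : F}
    (hf : DifferentiableAt 𝕜 f (x, y)) :
    fderiv 𝕜 (fun w => f (x, w)) y = (fderiv 𝕜 f (x, y)).comp (inr 𝕜 E F) :=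
  (hf.hasFDerivAt.comp y (hasFDerivAt_prodMk_right x y)).fderiv

theorem DifferentiableAt.hasFDerivAt_comp_prodMk_self {f : E × F → G} {u : F → E}
    {u' : F →L[𝕜] E} {y : F}
    (hf : DifferentiableAt 𝕜 f (u y, y)) (hu : HasFDerivAt u u' y) :
    HasFDerivAt (fun w => f (u w, w))
      ((fderiv 𝕜 (fun v => f (v, y)) (u y)).comp u' + fderiv 𝕜 (fun w => f (u y, w)) y) y := by
  have hsplit : inl 𝕜 E F ∘L u' + inr 𝕜 E F = u'.prod (ContinuousLinearMap.id 𝕜 F) := by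
    ext h <;> simp
  rw [hf.fderiv_prodMk_left, hf.fderiv_prodMk_right, comp_assoc, ← comp_add, hsplit]
  exact hf.hasFDerivAt.comp (f := fun w => (u w, w)) y (hu.prodMk (hasFDerivAt_id y))

end PartialDerivatives

theorem toDual_symm_comp_add_of_adjoint_eq {𝕜 U P : Type*} [RCLike 𝕜]
    [NormedAddCommGroup U] [InnerProductSpace 𝕜 U] [CompleteSpace U]
    [NormedAddCommGroup P] [InnerProductSpace 𝕜 P] [CompleteSpace P]
    {A : U →L[𝕜] U} {B u' : P →L[𝕜] U} {ℓ : U →L[𝕜] 𝕜} {m : P →L[𝕜] 𝕜} {ubar : U}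
    (hu' : u' = A.comp u' + B) (hadj : ubar = (toDual 𝕜 U).symm ℓ + adjoint A ubar) :
    (toDual 𝕜 P).symm (ℓ.comp u' + m) = (toDual 𝕜 P).symm m + adjoint B ubar := by
  refine ext_inner_right 𝕜 fun h => ?_
  have hpair : inner 𝕜 ubar (u' h) = ℓ (u' h) + inner 𝕜 ubar (A (u' h)) := by
    conv_lhs => rw [hadj]
    rw [inner_add_left, toDual_symm_apply, adjoint_inner_left]
  have hsplit : inner 𝕜 ubar (u' h) = inner 𝕜 ubar (A (u' h)) + inner 𝕜 ubar (B h) := by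
    conv_lhs => rw [hu']
    rw [add_apply, comp_apply, inner_add_right]
  rw [inner_add_left, toDual_symm_apply, toDual_symm_apply, adjoint_inner_left, add_apply,
    comp_apply]
  linear_combination hsplit - hpair

/-- Adjoint-based gradient formula: if `u` is a differentiable feasible solution map of
`u(ρ) = H(u(ρ), ρ)` and `ū` solves the adjoint equation
`ū = ∇_u J + (∂_u H)* ū` at `(u(ρ₀), ρ₀)`, then the gradient of the reduced objective
`ρ ↦ J(u(ρ), ρ)` at `ρ₀` equals `∇_ρ J + (∂_ρ H)* ū`. -/
theorem reduced_gradient_via_adjoint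
    {U P : Type*}
    [NormedAddCommGroup U] [InnerProductSpace ℝ U] [FiniteDimensional ℝ U]
    [NormedAddCommGroup P] [InnerProductSpace ℝ P] [FiniteDimensional ℝ P]
    (H : U × P → U) (J : U × P → ℝ) (u : P → U)
    (hH : Differentiable ℝ H) (hJ : Differentiable ℝ J)
    (hu : Differentiable ℝ u)
    (hfix : ∀ ρ : P, u ρ = H (u ρ, ρ))
    (ρ₀ : P) (ubar : U)
    (hadj : ubar = gradient (fun v => J (v, ρ₀)) (u ρ₀)
        + (ContinuousLinearMap.adjoint (fderiv ℝ (fun v => H (v, ρ₀)) (u ρ₀))) ubar) :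
    gradient (fun ρ => J (u ρ, ρ)) ρ₀
      = gradient (fun p => J (u ρ₀, p)) ρ₀
        + (ContinuousLinearMap.adjoint (fderiv ℝ (fun p => H (u ρ₀, p)) ρ₀)) ubar := by
  have hsens : fderiv ℝ u ρ₀ = (fderiv ℝ (fun v => H (v, ρ₀)) (u ρ₀)).comp (fderiv ℝ u ρ₀)
      + fderiv ℝ (fun p => H (u ρ₀, p)) ρ₀ := by
    have hfix_deriv := (hH _).hasFDerivAt_comp_prodMk_self (hu ρ₀).hasFDerivAt
    rw [show (fun ρ => H (u ρ, ρ)) = u from funext fun ρ => (hfix ρ).symm] at hfix_deriv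
    exact hfix_deriv.fderiv
  have hJ_reduced := ((hJ _).hasFDerivAt_comp_prodMk_self (hu ρ₀).hasFDerivAt).fderiv
  rw [gradient, hJ_reduced]
  exact toDual_symm_comp_add_of_adjoint_eq hsens hadj
end

section
/- Let U and P be finite-dimensional real inner product spaces, fix ρ ∈ P, and let H : U × P → U and J : U × P → ℝ be such that v ↦ H(v, ρ) is differentiable, v ↦ ∂_u H(v, ρ) and v ↦ ∇_u J(v, ρ) are continuous, the map v ↦ H(v, ρ) is Lipschitz with constant q < 1, and the operator norm ‖∂_u H(v, ρ)‖ ≤ q for all v ∈ U. Let u* be the unique fixed point of v ↦ H(v, ρ), and let ū* be the unique solution of the adjoint equation ū* = ∇_u J(u*, ρ) + (∂_u H(u*, ρ))* ū*. Then for any starting values u₀ ∈ U and ū₀ ∈ U, the piggyback iterates defined by u_{k+1} = H(u_k, ρ) and ū_{k+1} = ∇_u J(u_k, ρ) + (∂_u H(u_k, ρ))* ū_k satisfy u_k → u* and ū_k → ū* as k → ∞. -/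
/-!
The primal iterates converge because `v ↦ H(v, ρ)` is a `q`-contraction. The adjoint iteration
is the affine iteration `ū ↦ ∇_u J(u_k, ρ) + (∂_u H(u_k, ρ))* ū`, whose linear parts have norm at
most `q` and whose data converge to those of the adjoint equation since `u_k → u*`. Its error
`e_k = ‖ū_k - ū*‖` therefore satisfies `e_{k+1} ≤ q e_k + d_k` with `d_k → 0`, and such a
recursively damped sequence tends to `0`.
-/

open Filter Topology

theorem tendsto_zero_of_le_mul_add {q : ℝ} (hq0 : 0 ≤ q) (hq1 : q < 1) {a d : ℕ → ℝ}
    (ha : ∀ k, 0 ≤ a k) (hrec : ∀ k, a (k + 1) ≤ q * a k + d k)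
    (hd : Tendsto d atTop (𝓝 0)) :
    Tendsto a atTop (𝓝 0) := by
  rw [Metric.tendsto_atTop]
  intro ε hε
  obtain ⟨N, hN⟩ := (Metric.tendsto_atTop.mp hd) (ε * (1 - q) / 2) (by nlinarith)
  have tail_bound : ∀ m, a (N + m) ≤ q ^ m * a N + ε / 2 := by
    intro m
    induction m with
    | zero => simp; positivity
    | succ m ih =>
      have hdm : d (N + m) ≤ ε * (1 - q) / 2 :=
        (le_abs_self _).trans (by simpa using (hN (N + m) le_self_add).le)
      calc a (N + (m + 1)) ≤ q * a (N + m) + d (N + m) := hrec (N + m)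
        _ ≤ q * (q ^ m * a N + ε / 2) + ε * (1 - q) / 2 := by gcongr
        _ = q ^ (m + 1) * a N + ε / 2 := by ring
  have hgeom : Tendsto (fun m => q ^ m * a N) atTop (𝓝 0) := by
    simpa using (tendsto_pow_atTop_nhds_zero_of_lt_one hq0 hq1).mul_const (a N)
  obtain ⟨M, hM⟩ := (Metric.tendsto_atTop.mp hgeom) (ε / 2) (by positivity)
  refine ⟨N + M, fun k hk => ?_⟩
  obtain ⟨m, rfl⟩ := Nat.exists_eq_add_of_le (le_self_add.trans hk)
  have hm : q ^ m * a N < ε / 2 :=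
    (le_abs_self _).trans_lt (by simpa using hM m (by omega))
  rw [Real.dist_eq, sub_zero, abs_of_nonneg (ha _)]
  linarith [tail_bound m]

theorem tendsto_of_norm_sub_le_mul_add {E : Type*} [SeminormedAddCommGroup E]
    {q : ℝ} (hq0 : 0 ≤ q) (hq1 : q < 1) {x : ℕ → E} {x₀ : E} {d : ℕ → ℝ}
    (hrec : ∀ k, ‖x (k + 1) - x₀‖ ≤ q * ‖x k - x₀‖ + d k)
    (hd : Tendsto d atTop (𝓝 0)) :
    Tendsto x atTop (𝓝 x₀) :=
  tendsto_iff_norm_sub_tendsto_zero.mpr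
    (tendsto_zero_of_le_mul_add hq0 hq1 (fun _ => norm_nonneg _) hrec hd)

theorem tendsto_of_contracting_iteration {E : Type*} [SeminormedAddCommGroup E]
    {f : E → E} {q : ℝ} (hq0 : 0 ≤ q) (hq1 : q < 1)
    (hf : ∀ v w, ‖f v - f w‖ ≤ q * ‖v - w‖) {x₀ : E} (hx₀ : f x₀ = x₀)
    {x : ℕ → E} (hx : ∀ k, x (k + 1) = f (x k)) :
    Tendsto x atTop (𝓝 x₀) :=
  tendsto_of_norm_sub_le_mul_add hq0 hq1 (d := fun _ => 0)
    (fun k => by simpa [hx k, hx₀] using hf (x k) x₀) tendsto_const_nhds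

theorem tendsto_of_affine_iteration {E : Type*} [SeminormedAddCommGroup E] [NormedSpace ℝ E]
    {q : ℝ} (hq0 : 0 ≤ q) (hq1 : q < 1) {b : ℕ → E} {T : ℕ → E →L[ℝ] E} {b₀ x₀ : E}
    {T₀ : E →L[ℝ] E} (hb : Tendsto b atTop (𝓝 b₀)) (hT : Tendsto T atTop (𝓝 T₀))
    (hTq : ∀ k, ‖T k‖ ≤ q) (hx₀ : x₀ = b₀ + T₀ x₀) {x : ℕ → E}
    (hx : ∀ k, x (k + 1) = b k + T k (x k)) :
    Tendsto x atTop (𝓝 x₀) := by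
  set d : ℕ → ℝ := fun k => ‖b k - b₀ + (T k - T₀) x₀‖
  have hd : Tendsto d atTop (𝓝 0) := by
    have hTx₀ := ((ContinuousLinearMap.apply ℝ E x₀).continuous.tendsto _).comp (hT.sub_const T₀)
    simpa [d] using ((hb.sub_const b₀).add hTx₀).norm
  refine tendsto_of_norm_sub_le_mul_add hq0 hq1 (fun k => ?_) hd
  have hsplit : x (k + 1) - x₀ = (b k - b₀ + (T k - T₀) x₀) + T k (x k - x₀) := by
    conv_lhs => rw [hx k, hx₀]
    rw [map_sub, sub_apply]
    abel
  calc ‖x (k + 1) - x₀‖ ≤ d k + ‖T k (x k - x₀)‖ := hsplit ▸ norm_add_le _ _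
    _ ≤ d k + q * ‖x k - x₀‖ := by
        gcongr
        exact (T k).le_of_opNorm_le (hTq k) _
    _ = q * ‖x k - x₀‖ + d k := add_comm _ _

theorem piggyback_iteration_converges_general
    {U P : Type*}
    [NormedAddCommGroup U] [InnerProductSpace ℝ U] [FiniteDimensional ℝ U]
    (H : U × P → U) (J : U × P → ℝ) (ρ : P) (q : ℝ) (hq : q < 1)
    (hcontA : Continuous (fun v => fderiv ℝ (fun w => H (w, ρ)) v))
    (hcontg : Continuous (fun v => gradient (fun w => J (w, ρ)) v))
    (hlip : ∀ v w : U, ‖H (v, ρ) - H (w, ρ)‖ ≤ q * ‖v - w‖)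
    (hop : ∀ v : U, ‖fderiv ℝ (fun w => H (w, ρ)) v‖ ≤ q)
    (ustar : U) (hustar : ustar = H (ustar, ρ))
    (ubarstar : U)
    (hubarstar : ubarstar = gradient (fun w => J (w, ρ)) ustar
        + (ContinuousLinearMap.adjoint (fderiv ℝ (fun w => H (w, ρ)) ustar)) ubarstar)
    (u ubar : ℕ → U)
    (hurec : ∀ k : ℕ, u (k + 1) = H (u k, ρ))
    (hubrec : ∀ k : ℕ, ubar (k + 1) = gradient (fun w => J (w, ρ)) (u k)
        + (ContinuousLinearMap.adjoint (fderiv ℝ (fun w => H (w, ρ)) (u k))) (ubar k)) :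
    Filter.Tendsto u Filter.atTop (nhds ustar) ∧
      Filter.Tendsto ubar Filter.atTop (nhds ubarstar) := by
  have hq0 : 0 ≤ q := (norm_nonneg _).trans (hop ustar)
  have hu : Tendsto u atTop (𝓝 ustar) :=
    tendsto_of_contracting_iteration hq0 hq hlip hustar.symm hurec
  have hcontAdj := ContinuousLinearMap.adjoint.continuous.comp hcontA
  refine ⟨hu, tendsto_of_affine_iteration hq0 hq ((hcontg.tendsto ustar).comp hu)
    ((hcontAdj.tendsto ustar).comp hu) (fun k => ?_) hubarstar hubrec⟩
  simpa only [Function.comp_apply, LinearIsometryEquiv.norm_map] using hop (u k)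

/-- Convergence of the piggyback iteration: for a fixed design `ρ`, if `v ↦ H(v, ρ)` is
differentiable and a `q`-contraction (`q < 1`), with `‖∂_u H(v, ρ)‖ ≤ q` for all `v`, and
`v ↦ ∂_u H(v, ρ)` and `v ↦ ∇_u J(v, ρ)` are continuous, then the piggyback iterates
`u_{k+1} = H(u_k, ρ)`, `ū_{k+1} = ∇_u J(u_k, ρ) + (∂_u H(u_k, ρ))* ū_k` converge to the
unique fixed point `u*` and to the unique adjoint solution `ū*`, respectively. -/
theorem piggyback_iteration_converges
    {U P : Type*}
    [NormedAddCommGroup U] [InnerProductSpace ℝ U] [FiniteDimensional ℝ U]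
    [NormedAddCommGroup P] [InnerProductSpace ℝ P] [FiniteDimensional ℝ P]
    (H : U × P → U) (J : U × P → ℝ) (ρ : P) (q : ℝ) (hq : q < 1)
    (hdiff : Differentiable ℝ (fun v => H (v, ρ)))
    (hcontA : Continuous (fun v => fderiv ℝ (fun w => H (w, ρ)) v))
    (hcontg : Continuous (fun v => gradient (fun w => J (w, ρ)) v))
    (hlip : ∀ v w : U, ‖H (v, ρ) - H (w, ρ)‖ ≤ q * ‖v - w‖)
    (hop : ∀ v : U, ‖fderiv ℝ (fun w => H (w, ρ)) v‖ ≤ q)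
    (ustar : U) (hustar : ustar = H (ustar, ρ))
    (ubarstar : U)
    (hubarstar : ubarstar = gradient (fun w => J (w, ρ)) ustar
        + (ContinuousLinearMap.adjoint (fderiv ℝ (fun w => H (w, ρ)) ustar)) ubarstar)
    (u ubar : ℕ → U)
    (hurec : ∀ k : ℕ, u (k + 1) = H (u k, ρ))
    (hubrec : ∀ k : ℕ, ubar (k + 1) = gradient (fun w => J (w, ρ)) (u k)
        + (ContinuousLinearMap.adjoint (fderiv ℝ (fun w => H (w, ρ)) (u k))) (ubar k)) :
    Filter.Tendsto u Filter.atTop (nhds ustar) ∧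
      Filter.Tendsto ubar Filter.atTop (nhds ubarstar) :=
  piggyback_iteration_converges_general H J ρ q hq hcontA hcontg hlip hop ustar hustar ubarstar
    hubarstar u ubar hurec hubrec
end

section
/- Let E be a finite-dimensional real inner product space, L a positive natural number, and h₁, …, h_L : E → E maps. Given x ∈ E, define the forward sweep v₀ = x and v_{l+1} = h_{l+1}(v_l) for l = 0, …, L−1, and assume each h_{l+1} is Fréchet differentiable at v_l. Given z̄ ∈ E, define the reverse sweep v̄_L = z̄ and v̄_l = (Dh_{l+1}(v_l))* v̄_{l+1} for l = L−1, …, 0, where Dh_{l+1}(v_l) is the Fréchet derivative and * denotes the adjoint. Then the composition F = h_L ∘ h_{L−1} ∘ ⋯ ∘ h₁ is Fréchet differentiable at x and v̄₀ = (DF(x))* z̄; that is, the reverse sweep computes the transposed-Jacobian–vector product of the composed map. -/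
/-!
By the chain rule, `DF(x) = Dh_L(v_{L-1}) ∘ ⋯ ∘ Dh₁(v₀)`, and taking adjoints reverses the order
of a composition, so `(DF(x))* z̄ = Dh₁(v₀)* (⋯ (Dh_L(v_{L-1})* z̄))`, which is exactly what the
reverse sweep computes. Formally this is an induction on `L`, splitting off the last operation.
-/

/-- The composition `h_L ∘ h_{L−1} ∘ ⋯ ∘ h₁` of the elemental operations
(indices `0, …, L−1` correspond to `h₁, …, h_L`). -/
def compElem {E : Type*} : (L : ℕ) → (Fin L → E → E) → (E → E)
  | 0, _ => id
  | (L + 1), h => h (Fin.last L) ∘ compElem L (fun i => h i.castSucc)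

section Forward

variable {E : Type*}

theorem compElem_succ (L : ℕ) (h : Fin (L + 1) → E → E) :
    compElem (L + 1) h = h (Fin.last L) ∘ compElem L (fun i => h i.castSucc) :=
  rfl

theorem forward_sweep_castSucc {L : ℕ} {h : Fin (L + 1) → E → E} {v : Fin (L + 2) → E}
    (hv : ∀ l : Fin (L + 1), v l.succ = h l (v l.castSucc)) (l : Fin L) :
    v l.succ.castSucc = h l.castSucc (v l.castSucc.castSucc) := by
  rw [← Fin.succ_castSucc]
  exact hv l.castSucc

theorem compElem_apply_eq_last (L : ℕ) (h : Fin L → E → E) (v : Fin (L + 1) → E)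
    (hv : ∀ l : Fin L, v l.succ = h l (v l.castSucc)) :
    compElem L h (v 0) = v (Fin.last L) := by
  induction L with
  | zero => rfl
  | succ L ih =>
    have hinit := ih (fun i => h i.castSucc) (fun i => v i.castSucc) (forward_sweep_castSucc hv)
    rw [compElem_succ, Function.comp_apply, ← Fin.castSucc_zero, hinit, ← Fin.succ_last,
      hv (Fin.last L)]

theorem compElem_castSucc_apply_zero (L : ℕ) (h : Fin (L + 1) → E → E) (v : Fin (L + 2) → E)
    (hv : ∀ l : Fin (L + 1), v l.succ = h l (v l.castSucc)) :
    compElem L (fun i => h i.castSucc) (v 0) = v (Fin.last L).castSucc := by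
  simpa only [Fin.castSucc_zero] using
    compElem_apply_eq_last L (fun i => h i.castSucc) (fun i => v i.castSucc)
      (forward_sweep_castSucc hv)

end Forward

section Derivative

variable {𝕜 E : Type*} [NontriviallyNormedField 𝕜] [NormedAddCommGroup E] [NormedSpace 𝕜 E]

theorem differentiableAt_compElem (L : ℕ) (h : Fin L → E → E) (v : Fin (L + 1) → E)
    (hv : ∀ l : Fin L, v l.succ = h l (v l.castSucc))
    (hdiff : ∀ l : Fin L, DifferentiableAt 𝕜 (h l) (v l.castSucc)) :
    DifferentiableAt 𝕜 (compElem L h) (v 0) := by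
  induction L with
  | zero => exact differentiableAt_id
  | succ L ih =>
    have hinit := ih (fun i => h i.castSucc) (fun i => v i.castSucc) (forward_sweep_castSucc hv)
      (fun l => hdiff l.castSucc)
    have hlast : DifferentiableAt 𝕜 (h (Fin.last L))
        (compElem L (fun i => h i.castSucc) (v 0)) := by
      rw [compElem_castSucc_apply_zero L h v hv]
      exact hdiff (Fin.last L)
    exact hlast.comp _ hinit

theorem fderiv_compElem_succ (L : ℕ) (h : Fin (L + 1) → E → E) (v : Fin (L + 2) → E)
    (hv : ∀ l : Fin (L + 1), v l.succ = h l (v l.castSucc))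
    (hdiff : ∀ l : Fin (L + 1), DifferentiableAt 𝕜 (h l) (v l.castSucc)) :
    fderiv 𝕜 (compElem (L + 1) h) (v 0) =
      (fderiv 𝕜 (h (Fin.last L)) (v (Fin.last L).castSucc)).comp
        (fderiv 𝕜 (compElem L (fun i => h i.castSucc)) (v 0)) := by
  have hinit := compElem_castSucc_apply_zero L h v hv
  have hdinit := differentiableAt_compElem (𝕜 := 𝕜) L (fun i => h i.castSucc)
    (fun i => v i.castSucc) (forward_sweep_castSucc hv) (fun l => hdiff l.castSucc)
  rw [Fin.castSucc_zero] at hdinit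
  rw [compElem_succ, fderiv_comp _ (hinit ▸ hdiff (Fin.last L)) hdinit, hinit]

end Derivative

theorem adjoint_fderiv_compElem_apply {𝕜 E : Type*} [RCLike 𝕜] [NormedAddCommGroup E]
    [InnerProductSpace 𝕜 E] [CompleteSpace E]
    (L : ℕ) (h : Fin L → E → E) (v : Fin (L + 1) → E)
    (hv : ∀ l : Fin L, v l.succ = h l (v l.castSucc))
    (hdiff : ∀ l : Fin L, DifferentiableAt 𝕜 (h l) (v l.castSucc))
    (vbar : Fin (L + 1) → E)
    (hvb : ∀ l : Fin L, vbar l.castSucc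
        = (ContinuousLinearMap.adjoint (fderiv 𝕜 (h l) (v l.castSucc))) (vbar l.succ)) :
    vbar 0 = (ContinuousLinearMap.adjoint (fderiv 𝕜 (compElem L h) (v 0))) (vbar (Fin.last L)) := by
  induction L with
  | zero =>
    rw [show compElem 0 h = id from rfl, fderiv_id, ContinuousLinearMap.adjoint_id]
    rfl
  | succ L ih =>
    have hinit := ih (fun i => h i.castSucc) (fun i => v i.castSucc) (forward_sweep_castSucc hv)
      (fun l => hdiff l.castSucc) (fun i => vbar i.castSucc)
      (fun l => by rw [← Fin.succ_castSucc]; exact hvb l.castSucc)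
    rw [fderiv_compElem_succ L h v hv hdiff, ContinuousLinearMap.adjoint_comp,
      ContinuousLinearMap.comp_apply, ← Fin.succ_last, ← hvb (Fin.last L)]
    exact hinit

theorem reverse_mode_AD_transposed_jacobian_product_general
    {E : Type*} [NormedAddCommGroup E] [InnerProductSpace ℝ E] [FiniteDimensional ℝ E]
    (L : ℕ) (h : Fin L → E → E) (x : E)
    (v : Fin (L + 1) → E) (hv0 : v 0 = x)
    (hv : ∀ l : Fin L, v l.succ = h l (v l.castSucc))
    (hdiff : ∀ l : Fin L, DifferentiableAt ℝ (h l) (v l.castSucc))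
    (zbar : E) (vbar : Fin (L + 1) → E) (hvbL : vbar (Fin.last L) = zbar)
    (hvb : ∀ l : Fin L, vbar l.castSucc
        = (ContinuousLinearMap.adjoint (fderiv ℝ (h l) (v l.castSucc))) (vbar l.succ)) :
    DifferentiableAt ℝ (compElem L h) x ∧
      vbar 0 = (ContinuousLinearMap.adjoint (fderiv ℝ (compElem L h) x)) zbar := by
  subst hv0 hvbL
  exact ⟨differentiableAt_compElem L h v hv hdiff,
    adjoint_fderiv_compElem_apply L h v hv hdiff vbar hvb⟩

/-- Reverse mode of automatic differentiation: given the forward sweep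
`v₀ = x`, `v_{l+1} = h_{l+1}(v_l)` through elemental operations differentiable at the
visited points, the reverse sweep `v̄_L = z̄`, `v̄_l = (Dh_{l+1}(v_l))* v̄_{l+1}` computes
`v̄₀ = (DF(x))* z̄` for the composed map `F = h_L ∘ ⋯ ∘ h₁`, which is differentiable at `x`. -/
theorem reverse_mode_AD_transposed_jacobian_product
    {E : Type*} [NormedAddCommGroup E] [InnerProductSpace ℝ E] [FiniteDimensional ℝ E]
    (L : ℕ) (hL : 0 < L) (h : Fin L → E → E) (x : E)
    (v : Fin (L + 1) → E) (hv0 : v 0 = x)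
    (hv : ∀ l : Fin L, v l.succ = h l (v l.castSucc))
    (hdiff : ∀ l : Fin L, DifferentiableAt ℝ (h l) (v l.castSucc))
    (zbar : E) (vbar : Fin (L + 1) → E) (hvbL : vbar (Fin.last L) = zbar)
    (hvb : ∀ l : Fin L, vbar l.castSucc
        = (ContinuousLinearMap.adjoint (fderiv ℝ (h l) (v l.castSucc))) (vbar l.succ)) :
    DifferentiableAt ℝ (compElem L h) x ∧
      vbar 0 = (ContinuousLinearMap.adjoint (fderiv ℝ (compElem L h) x)) zbar :=
  reverse_mode_AD_transposed_jacobian_product_general L h x v hv0 hv hdiff zbar vbar hvbL hvb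
end

section
/- Let U and P be finite-dimensional real inner product spaces, N a positive natural number, Φ¹, …, Φᴺ : U × P → U continuously differentiable one-step time propagators, f : U × P → ℝ a continuously differentiable instantaneous quantity, w₀, …, w_N real weights, and g⁰ ∈ U a fixed initial condition. For ρ ∈ P define the forward trajectory u⁰(ρ) = g⁰ and uⁱ(ρ) = Φⁱ(u^{i−1}(ρ), ρ) for i = 1, …, N, and the objective J(ρ) = Σ_{i=0}^{N} w_i f(uⁱ(ρ), ρ). Fix ρ and define the backward adjoint sweep ūᴺ = w_N ∇_u f(uᴺ, ρ) and, for i = N−1 down to 0, ūⁱ = w_i ∇_u f(uⁱ, ρ) + (∂_u Φ^{i+1}(uⁱ, ρ))* ū^{i+1}, together with ρ̄ = Σ_{i=0}^{N} w_i ∇_ρ f(uⁱ, ρ) + Σ_{i=1}^{N} (∂_ρ Φⁱ(u^{i−1}, ρ))* ūⁱ. Then J is differentiable at ρ and its gradient equals ρ̄. -/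
/-! Differentiating the trajectory in a direction `h` gives the linearized recursion
`d⁰ = 0`, `dⁱ⁺¹ = ∂_u Φⁱ⁺¹ dⁱ + ∂_ρ Φⁱ⁺¹ h`. The backward recursion for `ū` is exactly what makes
`Σ_{i<n} w_i ⟪∇_u f(uⁱ), dⁱ⟫ + ⟪ūⁿ, dⁿ⟫ = Σ_{i<n} ⟪ūⁱ⁺¹, ∂_ρ Φⁱ⁺¹ h⟫` invariant in `n`; at `n = N`
this trades every term of `dJ(ρ) h` that involves the tangents `dⁱ` for one that is explicitly
linear in `h`, and the result is `⟪ρ̄, h⟫`. -/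

open Finset ContinuousLinearMap

/-- The forward trajectory of a one-step time marching scheme:
`u⁰ = g⁰` and `uⁱ = Φⁱ(u^{i−1}, ρ)` for `i ≥ 1`. -/
def forwardTraj {U P : Type*} (Φ : ℕ → U × P → U) (g0 : U) (ρ : P) : ℕ → U
  | 0 => g0
  | (i + 1) => Φ (i + 1) (forwardTraj Φ g0 ρ i, ρ)

section ChainRule

variable {𝕜 E P G : Type*} [NontriviallyNormedField 𝕜]
  [NormedAddCommGroup E] [NormedSpace 𝕜 E] [NormedAddCommGroup P] [NormedSpace 𝕜 P]
  [NormedAddCommGroup G] [NormedSpace 𝕜 G]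

theorem fderiv_comp_prodMk_apply {F : E × P → G} {g : P → E} {ρ : P}
    (hF : DifferentiableAt 𝕜 F (g ρ, ρ)) (hg : DifferentiableAt 𝕜 g ρ) (h : P) :
    fderiv 𝕜 (fun p => F (g p, p)) ρ h
      = fderiv 𝕜 (fun v => F (v, ρ)) (g ρ) (fderiv 𝕜 g ρ h)
        + fderiv 𝕜 (fun p => F (g ρ, p)) ρ h := by
  set F' := fderiv 𝕜 F (g ρ, ρ)
  have hF' : HasFDerivAt F F' (g ρ, ρ) := hF.hasFDerivAt
  have hcomp : HasFDerivAt (fun p => F (g p, p)) (F'.comp ((fderiv 𝕜 g ρ).prod (.id 𝕜 P))) ρ :=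
    hF'.comp (f := fun p => (g p, p)) ρ (hg.hasFDerivAt.prodMk (hasFDerivAt_id ρ))
  have hleft : HasFDerivAt (fun v => F (v, ρ)) (F'.comp (inl 𝕜 E P)) (g ρ) :=
    hF'.comp (g ρ) (hasFDerivAt_prodMk_left (g ρ) ρ)
  have hright : HasFDerivAt (fun p => F (g ρ, p)) (F'.comp (inr 𝕜 E P)) ρ :=
    hF'.comp ρ (hasFDerivAt_prodMk_right (g ρ) ρ)
  rw [hcomp.fderiv, hleft.fderiv, hright.fderiv]
  simp only [comp_apply, ContinuousLinearMap.prod_apply, coe_id', id_eq, inl_apply, inr_apply,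
    ← map_add, Prod.mk_add_mk, add_zero, zero_add]

end ChainRule

theorem fderiv_comp_prodMk_apply_eq_inner_gradient {𝕜 E P : Type*} [RCLike 𝕜]
    [NormedAddCommGroup E] [InnerProductSpace 𝕜 E] [CompleteSpace E]
    [NormedAddCommGroup P] [InnerProductSpace 𝕜 P] [CompleteSpace P]
    {f : E × P → 𝕜} {g : P → E} {ρ : P}
    (hf : DifferentiableAt 𝕜 f (g ρ, ρ)) (hg : DifferentiableAt 𝕜 g ρ) (h : P) :
    fderiv 𝕜 (fun p => f (g p, p)) ρ h
      = inner 𝕜 (gradient (fun v => f (v, ρ)) (g ρ)) (fderiv 𝕜 g ρ h)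
        + inner 𝕜 (gradient (fun p => f (g ρ, p)) ρ) h := by
  rw [inner_gradient_left, inner_gradient_left, fderiv_comp_prodMk_apply hf hg]

section Trajectory

variable {𝕜 U P : Type*} [NontriviallyNormedField 𝕜]
  [NormedAddCommGroup U] [NormedSpace 𝕜 U] [NormedAddCommGroup P] [NormedSpace 𝕜 P]
  {Φ : ℕ → U × P → U} {g0 : U}

theorem differentiable_forwardTraj {i : ℕ}
    (hΦ : ∀ j, 1 ≤ j → j ≤ i → Differentiable 𝕜 (Φ j)) :
    Differentiable 𝕜 (fun ρ => forwardTraj Φ g0 ρ i) := by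
  induction i with
  | zero => exact differentiable_const g0
  | succ i ih =>
    exact (hΦ (i + 1) le_add_self le_rfl).comp
      ((ih fun j hj hji => hΦ j hj (hji.trans i.le_succ)).prodMk differentiable_id)

theorem fderiv_forwardTraj_zero (ρ : P) :
    fderiv 𝕜 (fun ρ => forwardTraj Φ g0 ρ 0) ρ = 0 :=
  fderiv_const_apply g0

theorem fderiv_forwardTraj_succ_apply {i : ℕ} {ρ : P}
    (hΦ : DifferentiableAt 𝕜 (Φ (i + 1)) (forwardTraj Φ g0 ρ i, ρ))
    (hu : DifferentiableAt 𝕜 (fun ρ => forwardTraj Φ g0 ρ i) ρ) (h : P) :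
    fderiv 𝕜 (fun ρ => forwardTraj Φ g0 ρ (i + 1)) ρ h
      = fderiv 𝕜 (fun v => Φ (i + 1) (v, ρ)) (forwardTraj Φ g0 ρ i)
          (fderiv 𝕜 (fun ρ => forwardTraj Φ g0 ρ i) ρ h)
        + fderiv 𝕜 (fun p => Φ (i + 1) (forwardTraj Φ g0 ρ i, p)) ρ h :=
  fderiv_comp_prodMk_apply hΦ hu h

end Trajectory

section AdjointSweep

variable {𝕜 E : Type*} [RCLike 𝕜] [NormedAddCommGroup E] [InnerProductSpace 𝕜 E] [CompleteSpace E]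
  {A : ℕ → E →L[𝕜] E} {a b d ubar : ℕ → E}

local notation "⟪" x ", " y "⟫" => @inner 𝕜 _ _ x y

theorem sum_inner_add_inner_eq_of_adjoint_sweep {n : ℕ} (hd0 : d 0 = 0)
    (hd : ∀ i < n, d (i + 1) = A i (d i) + b i)
    (hubar : ∀ i < n, ubar i = a i + adjoint (A i) (ubar (i + 1))) :
    ∑ i ∈ range n, ⟪a i, d i⟫ + ⟪ubar n, d n⟫ = ∑ i ∈ range n, ⟪ubar (i + 1), b i⟫ := by
  induction n with
  | zero => simp [hd0]
  | succ n ih =>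
    have hstep : ⟪a n, d n⟫ + ⟪ubar (n + 1), d (n + 1)⟫ = ⟪ubar n, d n⟫ + ⟪ubar (n + 1), b n⟫ := by
      rw [hubar n n.lt_succ_self, hd n n.lt_succ_self, inner_add_left, inner_add_right,
        adjoint_inner_left]
      ring
    rw [sum_range_succ, sum_range_succ, ← ih (fun i hi => hd i (hi.trans n.lt_succ_self))
      (fun i hi => hubar i (hi.trans n.lt_succ_self))]
    linear_combination hstep

theorem sum_inner_eq_of_adjoint_sweep {N : ℕ} (hd0 : d 0 = 0)
    (hd : ∀ i < N, d (i + 1) = A i (d i) + b i) (hubarN : ubar N = a N)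
    (hubar : ∀ i < N, ubar i = a i + adjoint (A i) (ubar (i + 1))) :
    ∑ i ∈ range (N + 1), ⟪a i, d i⟫ = ∑ i ∈ range N, ⟪ubar (i + 1), b i⟫ := by
  rw [sum_range_succ, ← hubarN, sum_inner_add_inner_eq_of_adjoint_sweep hd0 hd hubar]

end AdjointSweep

local notation "⟪" x ", " y "⟫" => @inner ℝ _ _ x y

theorem discrete_adjoint_time_stepping_gradient_general
    {U P : Type*}
    [NormedAddCommGroup U] [InnerProductSpace ℝ U] [FiniteDimensional ℝ U]
    [NormedAddCommGroup P] [InnerProductSpace ℝ P] [FiniteDimensional ℝ P]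
    (N : ℕ)
    (Φ : ℕ → U × P → U) (hΦ : ∀ i : ℕ, 1 ≤ i → i ≤ N → ContDiff ℝ 1 (Φ i))
    (f : U × P → ℝ) (hf : ContDiff ℝ 1 f)
    (w : ℕ → ℝ) (g0 : U) (ρ : P)
    (ubar : ℕ → U)
    (hubarN : ubar N = w N • gradient (fun v => f (v, ρ)) (forwardTraj Φ g0 ρ N))
    (hubar : ∀ i : ℕ, i < N → ubar i
        = w i • gradient (fun v => f (v, ρ)) (forwardTraj Φ g0 ρ i)
          + (ContinuousLinearMap.adjoint
              (fderiv ℝ (fun v => Φ (i + 1) (v, ρ)) (forwardTraj Φ g0 ρ i))) (ubar (i + 1)))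
    (rbar : P)
    (hrbar : rbar
        = (∑ i ∈ Finset.range (N + 1),
            w i • gradient (fun p => f (forwardTraj Φ g0 ρ i, p)) ρ)
          + ∑ i ∈ Finset.range N,
            (ContinuousLinearMap.adjoint
              (fderiv ℝ (fun p => Φ (i + 1) (forwardTraj Φ g0 ρ i, p)) ρ)) (ubar (i + 1))) :
    DifferentiableAt ℝ
        (fun ρ' => ∑ i ∈ Finset.range (N + 1), w i * f (forwardTraj Φ g0 ρ' i, ρ')) ρ ∧
      gradient
        (fun ρ' => ∑ i ∈ Finset.range (N + 1), w i * f (forwardTraj Φ g0 ρ' i, ρ')) ρ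
        = rbar := by
  have hf₁ : Differentiable ℝ f := hf.differentiable one_ne_zero
  have hΦ₁ : ∀ i, 1 ≤ i → i ≤ N → Differentiable ℝ (Φ i) :=
    fun i hi hiN => (hΦ i hi hiN).differentiable one_ne_zero
  have hu : ∀ i ≤ N, Differentiable ℝ (fun ρ' => forwardTraj Φ g0 ρ' i) :=
    fun i hi => differentiable_forwardTraj fun j hj hji => hΦ₁ j hj (hji.trans hi)
  have hfu : ∀ i ≤ N, DifferentiableAt ℝ (fun ρ' => f (forwardTraj Φ g0 ρ' i, ρ')) ρ :=
    fun i hi => (hf₁ _).comp ρ ((hu i hi ρ).prodMk differentiableAt_id)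
  have hJ : HasFDerivAt
      (fun ρ' => ∑ i ∈ range (N + 1), w i * f (forwardTraj Φ g0 ρ' i, ρ'))
      (∑ i ∈ range (N + 1), w i • fderiv ℝ (fun ρ' => f (forwardTraj Φ g0 ρ' i, ρ')) ρ) ρ :=
    HasFDerivAt.fun_sum fun i hi => (hfu i (mem_range_succ_iff.mp hi)).hasFDerivAt.const_mul (w i)
  refine ⟨hJ.differentiableAt, ext_inner_right ℝ fun h => ?_⟩
  have hsweep := sum_inner_eq_of_adjoint_sweep
    (d := fun i => fderiv ℝ (fun ρ' => forwardTraj Φ g0 ρ' i) ρ h)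
    (b := fun i => fderiv ℝ (fun p => Φ (i + 1) (forwardTraj Φ g0 ρ i, p)) ρ h)
    (by rw [fderiv_forwardTraj_zero, zero_apply])
    (fun i hi => fderiv_forwardTraj_succ_apply (hΦ₁ (i + 1) le_add_self hi _) (hu i hi.le ρ) h)
    hubarN hubar
  calc ⟪gradient _ ρ, h⟫
      = ∑ i ∈ range (N + 1), w i * fderiv ℝ (fun ρ' => f (forwardTraj Φ g0 ρ' i, ρ')) ρ h := by
        simp only [inner_gradient_left, hJ.fderiv, _root_.sum_apply, smul_apply, smul_eq_mul]
    _ = ∑ i ∈ range (N + 1), ⟪w i • gradient (fun v => f (v, ρ)) (forwardTraj Φ g0 ρ i),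
            fderiv ℝ (fun ρ' => forwardTraj Φ g0 ρ' i) ρ h⟫
          + ∑ i ∈ range (N + 1), ⟪w i • gradient (fun p => f (forwardTraj Φ g0 ρ i, p)) ρ, h⟫ := by
        rw [← sum_add_distrib]
        refine sum_congr rfl fun i hi => ?_
        rw [fderiv_comp_prodMk_apply_eq_inner_gradient (hf₁ _) (hu i (mem_range_succ_iff.mp hi) ρ),
          real_inner_smul_left, real_inner_smul_left, mul_add]
    _ = ⟪rbar, h⟫ := by
        rw [hsweep, hrbar, inner_add_left, sum_inner, sum_inner, add_comm]
        simp only [adjoint_inner_left]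

/-- Discrete adjoint time marching: for the objective
`J(ρ) = Σ_{i=0}^{N} w_i f(uⁱ(ρ), ρ)` along the forward trajectory `uⁱ(ρ)` of the `C¹`
propagators `Φⁱ`, the backward adjoint sweep `ūᴺ = w_N ∇_u f(uᴺ, ρ)`,
`ūⁱ = w_i ∇_u f(uⁱ, ρ) + (∂_u Φ^{i+1}(uⁱ, ρ))* ū^{i+1}` together with
`ρ̄ = Σ_{i=0}^{N} w_i ∇_ρ f(uⁱ, ρ) + Σ_{i=1}^{N} (∂_ρ Φⁱ(u^{i−1}, ρ))* ūⁱ`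
computes the gradient of `J` at `ρ`, and `J` is differentiable at `ρ`. -/
theorem discrete_adjoint_time_stepping_gradient
    {U P : Type*}
    [NormedAddCommGroup U] [InnerProductSpace ℝ U] [FiniteDimensional ℝ U]
    [NormedAddCommGroup P] [InnerProductSpace ℝ P] [FiniteDimensional ℝ P]
    (N : ℕ) (hN : 0 < N)
    (Φ : ℕ → U × P → U) (hΦ : ∀ i : ℕ, 1 ≤ i → i ≤ N → ContDiff ℝ 1 (Φ i))
    (f : U × P → ℝ) (hf : ContDiff ℝ 1 f)
    (w : ℕ → ℝ) (g0 : U) (ρ : P)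
    (ubar : ℕ → U)
    (hubarN : ubar N = w N • gradient (fun v => f (v, ρ)) (forwardTraj Φ g0 ρ N))
    (hubar : ∀ i : ℕ, i < N → ubar i
        = w i • gradient (fun v => f (v, ρ)) (forwardTraj Φ g0 ρ i)
          + (ContinuousLinearMap.adjoint
              (fderiv ℝ (fun v => Φ (i + 1) (v, ρ)) (forwardTraj Φ g0 ρ i))) (ubar (i + 1)))
    (rbar : P)
    (hrbar : rbar
        = (∑ i ∈ Finset.range (N + 1),
            w i • gradient (fun p => f (forwardTraj Φ g0 ρ i, p)) ρ)
          + ∑ i ∈ Finset.range N,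
            (ContinuousLinearMap.adjoint
              (fderiv ℝ (fun p => Φ (i + 1) (forwardTraj Φ g0 ρ i, p)) ρ)) (ubar (i + 1))) :
    DifferentiableAt ℝ
        (fun ρ' => ∑ i ∈ Finset.range (N + 1), w i * f (forwardTraj Φ g0 ρ' i, ρ')) ρ ∧
      gradient
        (fun ρ' => ∑ i ∈ Finset.range (N + 1), w i * f (forwardTraj Φ g0 ρ' i, ρ')) ρ
        = rbar :=
  discrete_adjoint_time_stepping_gradient_general N Φ hΦ f hf w g0 ρ ubar hubarN hubar rbar hrbar
end
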